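/- If X^n + X + 1 has r ≥ 2 distinct irreducible factors over F₂, then X^{2^n − 1} + X + 1 has at least 2^r − 1 irreducible factors (counted with multiplicity at least, i.e., it is a product of at least 2^r − 1 non-unit polynomials) over F₂. -/

import Mathlib

/-!
For `S ⊆ {0, …, r-1}` put `L_S = hat (∏_{i ∈ S} fᵢ)`. Since `hat` is additive and sends
multiples of `q` to multiples of `hat q`, the Bézout relations between the coprime `fᵢ` give
`L_S ∣ L_T` for `S ⊆ T` and `gcd (L_S, L_T) = L_{S ∩ T}`; all `L_S` are squarefree because the
derivative of `hat p` is the constant `p(0)`. The part `g_S` of `L_S` prime to every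
`L_{S ∖ {i}}` (`i ∈ S`) is a non-unit: if `αᵢ ≠ 0` is a root of `hat fᵢ`, then `∑_{i ∈ S} αᵢ` is a
root of `L_S` but of no `L_{S ∖ {i}}`. The `2^r - 1` factors `g_S`, `S ≠ ∅`, are pairwise coprime,
prime to `X`, and divide `L_univ = X * (X^(2^n-1) + X + 1)`.
-/

open Function Polynomial

theorem Squarefree.exists_dvd_isRelPrime_not_isUnit {α : Type*} [CommMonoidWithZero α]
    [GCDMonoid α] {a b : α} (ha : Squarefree a) (hab : ¬a ∣ b) :
    ∃ g, g ∣ a ∧ IsRelPrime g b ∧ ¬IsUnit g := by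
  obtain ⟨g, hg⟩ := gcd_dvd_left a b
  have hga : g ∣ a := hg ▸ dvd_mul_left g _
  refine ⟨g, hga, fun d hdg hdb => ha d ?_, fun hu => hab ?_⟩
  · rw [hg]
    exact mul_dvd_mul (dvd_gcd (hdg.trans hga) hdb) hdg
  · rw [hg, hu.mul_right_dvd]
    exact gcd_dvd_right a b

section SubsetFamily

variable {α ι : Type*} [CommMonoid α] [DecidableEq ι] {L g : Finset ι → α}
  (hmono : ∀ ⦃S T⦄, S ⊆ T → L S ∣ L T)
  (hinter : ∀ ⦃d S T⦄, d ∣ L S → d ∣ L T → d ∣ L (S ∩ T))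
  (hg : ∀ S, g S ∣ L S) (hnew : ∀ S, IsRelPrime (g S) (∏ i ∈ S, L (S.erase i)))
include hmono hinter hg hnew

theorem isRelPrime_of_mem_of_notMem {S T : Finset ι} {i : ι} (hiS : i ∈ S) (hiT : i ∉ T) :
    IsRelPrime (g S) (g T) := by
  intro d hdS hdT
  have hsub : S ∩ T ⊆ S.erase i :=
    Finset.subset_erase.mpr ⟨Finset.inter_subset_left, fun hi => hiT (Finset.mem_inter.mp hi).2⟩
  exact hnew S hdS ((hinter (hdS.trans (hg S)) (hdT.trans (hg T))).trans
    ((hmono hsub).trans (Finset.dvd_prod_of_mem _ hiS)))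

theorem pairwise_isRelPrime_of_isRelPrime_prod_erase : Pairwise (IsRelPrime on g) := by
  intro S T hST
  obtain ⟨i, hiS, hiT⟩ | ⟨i, hiT, hiS⟩ : (∃ i ∈ S, i ∉ T) ∨ ∃ i ∈ T, i ∉ S := by
    by_contra! h
    exact hST (Finset.Subset.antisymm h.1 h.2)
  · exact isRelPrime_of_mem_of_notMem hmono hinter hg hnew hiS hiT
  · exact (isRelPrime_of_mem_of_notMem hmono hinter hg hnew hiT hiS).symm

end SubsetFamily

theorem exists_fin_prod_eq_of_prod_dvd {M ι : Type*} [CommMonoid M] {s : Finset ι} {g : ι → M}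
    {a : M} {m : ℕ} (hm : s.card = m) (hs : s.Nonempty) (hg : ∀ i ∈ s, ¬IsUnit (g i))
    (h : ∏ i ∈ s, g i ∣ a) : ∃ g' : Fin m → M, (∀ j, ¬IsUnit (g' j)) ∧ a = ∏ j, g' j := by
  subst hm
  obtain ⟨c, rfl⟩ := h
  let e : Fin s.card ≃ s := s.equivFin.symm
  let j₀ : Fin s.card := ⟨0, hs.card_pos⟩
  refine ⟨fun j => g (e j) * if j = j₀ then c else 1, fun j hu => ?_, ?_⟩
  · exact hg _ (e j).2 (isUnit_of_mul_isUnit_left hu)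
  · rw [Finset.prod_mul_distrib, Finset.prod_ite_eq' Finset.univ j₀ fun _ => c,
      if_pos (Finset.mem_univ _), Equiv.prod_comp e (fun i => g i), Finset.prod_coe_sort s g]

namespace Polynomial

section Hat

variable {R : Type*} [CommSemiring R]

/-- `hat (∑ aᵢ Xⁱ) = ∑ aᵢ X^(2^i)`. -/
noncomputable def hat : R[X] →ₗ[R] R[X] :=
  lsum fun i => LinearMap.toSpanSingleton R R[X] (X ^ 2 ^ i)

theorem hat_monomial (i : ℕ) (a : R) : hat (monomial i a) = C a * X ^ 2 ^ i := by
  simp [hat, lsum, smul_eq_C_mul]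

theorem hat_X_pow (m : ℕ) : hat (X ^ m : R[X]) = X ^ 2 ^ m := by
  rw [X_pow_eq_monomial, hat_monomial, C_1, one_mul]

theorem hat_one : hat (1 : R[X]) = X := by
  simpa using hat_X_pow (R := R) 0

theorem hat_X : hat (X : R[X]) = X ^ 2 := by
  simpa using hat_X_pow (R := R) 1

theorem hat_X_pow_add_X_add_one (n : ℕ) :
    hat (X ^ n + X + 1 : R[X]) = X * (X ^ (2 ^ n - 1) + X + 1) := by
  rw [map_add, map_add, hat_X_pow, hat_X, hat_one, mul_add, mul_add,
    mul_pow_sub_one (pow_ne_zero n two_ne_zero), mul_one, sq]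

theorem hat_coeff_two_pow (p : R[X]) (k : ℕ) : (hat p).coeff (2 ^ k) = p.coeff k := by
  induction p using Polynomial.induction_on' with
  | add p q hp hq => rw [map_add, coeff_add, coeff_add, hp, hq]
  | monomial i a =>
    simp only [hat_monomial, coeff_C_mul_X_pow, coeff_monomial,
      (Nat.pow_right_injective le_rfl).eq_iff, eq_comm]

theorem X_dvd_hat (p : R[X]) : X ∣ hat p := by
  induction p using Polynomial.induction_on' with
  | add p q hp hq => rw [map_add]; exact dvd_add hp hq
  | monomial i a =>
    rw [hat_monomial]
    exact dvd_mul_of_dvd_right (dvd_pow_self X (pow_ne_zero i two_ne_zero)) _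

theorem derivative_hat [CharP R 2] (p : R[X]) : derivative (hat p) = C (p.coeff 0) := by
  induction p using Polynomial.induction_on' with
  | add p q hp hq => rw [map_add, derivative_add, hp, hq, coeff_add, C_add]
  | monomial i a =>
    rw [hat_monomial, derivative_C_mul_X_pow, coeff_monomial]
    cases i with
    | zero => simp
    | succ i => simp [pow_succ, CharTwo.two_eq_zero]

theorem aeval_hat_add {A : Type*} [CommRing A] [Algebra R A] [CharP A 2] (x y : A)
    (p : R[X]) : aeval (x + y) (hat p) = aeval x (hat p) + aeval y (hat p) := by
  induction p using Polynomial.induction_on' with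
  | add p q hp hq => simp only [map_add, hp, hq]; ring
  | monomial i a => simp only [hat_monomial, map_mul, aeval_C, map_pow, aeval_X,
      add_pow_char_pow, mul_add]

theorem aeval_hat_sum {A ι : Type*} [CommRing A] [Algebra R A] [CharP A 2]
    (s : Finset ι) (x : ι → A) (p : R[X]) :
    aeval (∑ i ∈ s, x i) (hat p) = ∑ i ∈ s, aeval (x i) (hat p) :=
  map_sum (AddMonoidHom.mk' (fun x => aeval x (hat p)) fun x y => aeval_hat_add x y p) x s

end Hat

theorem separable_hat {k : Type*} [Field k] [CharP k 2] {p : k[X]} (h0 : p.coeff 0 ≠ 0) :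
    (hat p).Separable := by
  rw [Separable, derivative_hat]
  simpa using (isCoprime_mul_unit_left_right (isUnit_C.mpr h0.isUnit) (hat p) 1).mpr
    isCoprime_one_right

theorem exists_ne_zero_aeval_hat_eq_zero {k K : Type*} [Field k] [CharP k 2] [Field K]
    [IsAlgClosed K] [Algebra k K] {p : k[X]} (h0 : p.coeff 0 ≠ 0) (hdeg : 0 < p.natDegree) :
    ∃ α : K, α ≠ 0 ∧ aeval α (hat p) = 0 := by
  have hlead : (hat p).coeff (2 ^ p.natDegree) ≠ 0 := by
    rw [hat_coeff_two_pow, ← leadingCoeff]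
    exact leadingCoeff_ne_zero.mpr (ne_zero_of_natDegree_gt hdeg)
  have hcard : 1 < Fintype.card ((hat p).rootSet K) := by
    rw [card_rootSet_eq_natDegree (separable_hat h0) (IsAlgClosed.splits _)]
    exact (Nat.one_lt_two_pow hdeg.ne').trans_le (le_natDegree_of_ne_zero hlead)
  obtain ⟨α, hα, hα0⟩ :=
    (Set.nontrivial_coe_sort.mp (Fintype.one_lt_card_iff_nontrivial.mp hcard)).exists_ne 0
  exact ⟨α, hα0, (mem_rootSet.mp hα).2⟩

theorem hat_X_pow_mul (k : ℕ) (p : (ZMod 2)[X]) : hat (X ^ k * p) = hat p ^ 2 ^ k := by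
  induction p using Polynomial.induction_on' with
  | add p q hp hq => rw [mul_add, map_add, map_add, hp, hq, add_pow_char_pow]
  | monomial j a =>
    rw [X_pow_mul_monomial, hat_monomial, hat_monomial, mul_pow, ← C_pow, ZMod.pow_card_pow,
      ← pow_mul, ← pow_add]

theorem hat_dvd_hat_mul (p q : (ZMod 2)[X]) : hat q ∣ hat (p * q) := by
  induction p using Polynomial.induction_on' with
  | add p p' hp hp' => rw [add_mul, map_add]; exact dvd_add hp hp'
  | monomial i a =>
    rw [← C_mul_X_pow_eq_monomial, mul_assoc, ← smul_eq_C_mul, map_smul, hat_X_pow_mul,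
      smul_eq_C_mul]
    exact dvd_mul_of_dvd_right (dvd_pow_self _ (pow_ne_zero i two_ne_zero)) _

theorem monic_of_ne_zero_zmod_two {p : (ZMod 2)[X]} (hp : p ≠ 0) : p.Monic := by
  have hunit : ∀ a : ZMod 2, a ≠ 0 → a = 1 := by decide
  exact hunit _ (leadingCoeff_ne_zero.mpr hp)

theorem pairwise_isCoprime_of_irreducible {ι : Type*} {f : ι → (ZMod 2)[X]}
    (hirr : ∀ i, Irreducible (f i)) (hinj : Function.Injective f) :
    Pairwise (IsCoprime on f) := by
  intro i j hij
  refine (hirr i).coprime_iff_not_dvd.mpr fun hdvd => hij (hinj ?_)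
  exact eq_of_monic_of_associated (monic_of_ne_zero_zmod_two (hirr i).ne_zero)
    (monic_of_ne_zero_zmod_two (hirr j).ne_zero) ((hirr i).associated_of_dvd (hirr j) hdvd)

section HatProd

variable {ι : Type*} (f : ι → (ZMod 2)[X])

noncomputable def hatProd (S : Finset ι) : (ZMod 2)[X] := hat (∏ i ∈ S, f i)

theorem hatProd_empty : hatProd f ∅ = X := by
  rw [hatProd, Finset.prod_empty, hat_one]

theorem hatProd_singleton (i : ι) : hatProd f {i} = hat (f i) := by
  rw [hatProd, Finset.prod_singleton]

theorem hatProd_dvd_hatProd {S T : Finset ι} (h : S ⊆ T) : hatProd f S ∣ hatProd f T := by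
  obtain ⟨c, hc⟩ := Finset.prod_dvd_prod_of_subset S T f h
  rw [hatProd, hatProd, hc, mul_comm]
  exact hat_dvd_hat_mul _ _

variable {f}

theorem squarefree_hatProd (hf0 : ∀ i, (f i).coeff 0 ≠ 0) (S : Finset ι) :
    Squarefree (hatProd f S) := by
  refine (separable_hat ?_).squarefree
  rw [coeff_zero_prod]
  exact Finset.prod_ne_zero_iff.mpr fun i _ => hf0 i

variable [DecidableEq ι]

theorem exists_add_eq_hatProd_inter (hcop : Pairwise (IsCoprime on f)) (S T : Finset ι) :
    ∃ a b, hatProd f S * a + hatProd f T * b = hatProd f (S ∩ T) := by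
  have hST : IsCoprime (∏ i ∈ S \ T, f i) (∏ i ∈ T, f i) :=
    IsCoprime.prod_left fun i hi => IsCoprime.prod_right fun j hj =>
      hcop fun hij => (Finset.mem_sdiff.mp hi).2 (hij ▸ hj)
  obtain ⟨u, v, huv⟩ := hST
  have hsum : u * ∏ i ∈ S, f i + (v * ∏ i ∈ S ∩ T, f i) * ∏ i ∈ T, f i = ∏ i ∈ S ∩ T, f i := by
    rw [← Finset.prod_inter_mul_prod_sdiff S T]
    linear_combination (∏ i ∈ S ∩ T, f i) * huv
  obtain ⟨a, ha⟩ := hat_dvd_hat_mul u (∏ i ∈ S, f i)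
  obtain ⟨b, hb⟩ := hat_dvd_hat_mul (v * ∏ i ∈ S ∩ T, f i) (∏ i ∈ T, f i)
  refine ⟨a, b, ?_⟩
  rw [hatProd, hatProd, hatProd, ← ha, ← hb, ← map_add, hsum]

theorem dvd_hatProd_inter (hcop : Pairwise (IsCoprime on f)) {d : (ZMod 2)[X]}
    {S T : Finset ι} (hS : d ∣ hatProd f S) (hT : d ∣ hatProd f T) : d ∣ hatProd f (S ∩ T) := by
  obtain ⟨a, b, hab⟩ := exists_add_eq_hatProd_inter hcop S T
  exact hab ▸ dvd_add (dvd_mul_of_dvd_left hS a) (dvd_mul_of_dvd_left hT b)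

theorem not_hatProd_dvd_prod_hatProd_erase (hcop : Pairwise (IsCoprime on f))
    (hf0 : ∀ i, (f i).coeff 0 ≠ 0) (hdeg : ∀ i, 0 < (f i).natDegree) (S : Finset ι) :
    ¬hatProd f S ∣ ∏ i ∈ S, hatProd f (S.erase i) := by
  choose α hα0 hα using fun i =>
    exists_ne_zero_aeval_hat_eq_zero (K := AlgebraicClosure (ZMod 2)) (hf0 i) (hdeg i)
  have hroot : ∀ ⦃i T⦄, i ∈ T → aeval (α i) (hatProd f T) = 0 := fun i T hi => by
    obtain ⟨c, hc⟩ := hatProd_dvd_hatProd f (Finset.singleton_subset_iff.mpr hi)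
    rw [hc, map_mul, hatProd_singleton, hα, zero_mul]
  have hnonroot : ∀ ⦃i T⦄, i ∉ T → aeval (α i) (hatProd f T) ≠ 0 := fun i T hi h => by
    obtain ⟨a, b, hab⟩ := exists_add_eq_hatProd_inter hcop {i} T
    rw [Finset.singleton_inter_of_notMem hi, hatProd_empty] at hab
    have := congrArg (aeval (α i)) hab
    rw [map_add, map_mul, map_mul, hroot (Finset.mem_singleton_self i), h, aeval_X] at this
    exact hα0 i (by simpa using this.symm)
  set β := ∑ i ∈ S, α i
  have hβ : aeval β (hatProd f S) = 0 := by
    rw [hatProd, aeval_hat_sum]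
    exact Finset.sum_eq_zero fun i hi => hroot hi
  have hβ_erase : ∀ i ∈ S, aeval β (hatProd f (S.erase i)) ≠ 0 := fun i hi => by
    rw [hatProd, aeval_hat_sum, ← hatProd, Finset.sum_eq_single_of_mem i hi fun j hj hji =>
      hroot (Finset.mem_erase.mpr ⟨hji, hj⟩)]
    exact hnonroot (Finset.notMem_erase i S)
  rintro ⟨c, hc⟩
  have := congrArg (aeval β) hc
  rw [map_mul, hβ, zero_mul, map_prod] at this
  obtain ⟨i, hi, h⟩ := Finset.prod_eq_zero_iff.mp this
  exact hβ_erase i hi h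

end HatProd

end Polynomial

theorem stmt_18 (n : ℕ) (hn : 2 ≤ n) (r : ℕ) (hr : 2 ≤ r)
    (f : Fin r → (ZMod 2)[X]) (hirr : ∀ i, Irreducible (f i))
    (hdist : Function.Injective f) (hdvd : ∀ i, f i ∣ X ^ n + X + 1)
    (hfac : (X ^ n + X + 1 : (ZMod 2)[X]) = ∏ i, f i) :
    ∃ g : Fin (2 ^ r - 1) → (ZMod 2)[X],
      (∀ i, ¬ IsUnit (g i)) ∧
      (X ^ (2 ^ n - 1) + X + 1 : (ZMod 2)[X]) = ∏ i, g i := by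
  classical
  have hcop := pairwise_isCoprime_of_irreducible hirr hdist
  have hf0 : ∀ i, (f i).coeff 0 ≠ 0 := fun i h0 => by
    have hn0 : 0 ≠ n := by omega
    have := X_dvd_iff.mp ((X_dvd_iff.mpr h0).trans (hdvd i))
    simp [coeff_X_pow, hn0] at this
  choose g hg_dvd hg_new hg_unit using fun S =>
    (squarefree_hatProd hf0 S).exists_dvd_isRelPrime_not_isUnit
      (not_hatProd_dvd_prod_hatProd_erase hcop hf0 (fun i => (hirr i).natDegree_pos) S)
  have hpair := pairwise_isRelPrime_of_isRelPrime_prod_erase (fun _ _ => hatProd_dvd_hatProd f)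
    (fun _ _ _ => dvd_hatProd_inter hcop) hg_dvd hg_new
  have hgX : ∀ S ∈ Finset.univ.erase ∅, IsRelPrime (g S) X := fun S hS => by
    obtain ⟨i, hi⟩ := Finset.nonempty_iff_ne_empty.mpr (Finset.ne_of_mem_erase hS)
    exact (hg_new S).of_dvd_right ((X_dvd_hat _).trans (Finset.dvd_prod_of_mem _ hi))
  have hprod : ∏ S ∈ Finset.univ.erase ∅, g S ∣ X ^ (2 ^ n - 1) + X + 1 := by
    refine (IsRelPrime.prod_left hgX).dvd_of_dvd_mul_left ?_
    rw [← hat_X_pow_add_X_add_one, hfac]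
    exact Finset.prod_dvd_of_isRelPrime (hpair.set_pairwise _) fun S _ =>
      (hg_dvd S).trans (hatProd_dvd_hatProd f (Finset.subset_univ S))
  refine exists_fin_prod_eq_of_prod_dvd ?_ ⟨{⟨0, by omega⟩}, by simp⟩ (fun S _ => hg_unit S) hprod
  rw [Finset.card_erase_of_mem (Finset.mem_univ _), Finset.card_univ, Fintype.card_finset,
    Fintype.card_fin]
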